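/- The First-UIP-Nogood of a conflict graph—the conflict nogood of the cut placing exactly the literals on some path from the First-UIP to a conflicting literal (excluding the First-UIP) on the conflict side—contains the complement-free set of predecessors such that exactly one of its literals (the First-UIP) is at the conflict decision level. -/

import Mathlib

/-!
Every literal of level `d` is reachable from the decision literal `σd`: following reasons
backwards stays at level `d` and must stop at `σd`, as the graph is finite and acyclic. Now let
`a ≠ u` of level `d` have an edge `a → b` into the conflict side. The path `σd ⇝ a → b ⇝ σ`
(or `σ.compl`) passes through the UIP `u`; it cannot do so after `b`, because `u ⇝ b` and
the graph is acyclic, so `u ⇝ a ⇝ σ` and `a` lies on the conflict side itself.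
-/

inductive Lit (V : Type) where
  | pos : V → Lit V
  | neg : V → Lit V
deriving DecidableEq

def Lit.compl {V : Type} : Lit V → Lit V
  | .pos v => .neg v
  | .neg v => .pos v

def IsPath {α : Type} (E : α → α → Prop) (l : List α) (a b : α) : Prop :=
  l.Chain' E ∧ l.head? = some a ∧ l.getLast? = some b

/-- A UIP: a node through which every path from the decision literal `σd`
to a conflicting literal passes. -/
def IsUIP {V : Type} (nodes : Finset (Lit V)) (E : Lit V → Lit V → Prop)
    (σ σd u : Lit V) : Prop :=
  u ∈ nodes ∧
  ∀ (l : List (Lit V)) (c : Lit V), (c = σ ∨ c = Lit.compl σ) →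
    IsPath E l σd c → u ∈ l

open Relation

section Paths

variable {α : Type} {E : α → α → Prop} {l l₁ l₂ : List α} {a b x y : α}

theorem IsPath.reflTransGen_of_mem_left (h : IsPath E l a b) (hx : x ∈ l) :
    ReflTransGen E a x := by
  obtain ⟨hchain, hhead, -⟩ := h
  refine hchain.induction (ReflTransGen E a ·) l (fun _ _ hyz hay => hay.tail hyz)
    (fun hne => ?_) x hx
  rw [List.head?_eq_some_head hne, Option.some_inj] at hhead
  exact hhead ▸ .refl

theorem IsPath.reflTransGen_of_mem_right (h : IsPath E l a b) (hx : x ∈ l) :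
    ReflTransGen E x b := by
  obtain ⟨hchain, -, hlast⟩ := h
  refine hchain.backwards_induction (ReflTransGen E · b) l (fun _ _ hyz hzb => hzb.head hyz)
    (fun hne => ?_) x hx
  rw [List.getLast?_eq_some_getLast hne, Option.some_inj] at hlast
  exact hlast ▸ .refl

theorem IsPath.append (h₁ : IsPath E l₁ a x) (hxy : E x y) (h₂ : IsPath E l₂ y b) :
    IsPath E (l₁ ++ l₂) a b := by
  obtain ⟨hc₁, hhead₁, hlast₁⟩ := h₁
  obtain ⟨hc₂, hhead₂, hlast₂⟩ := h₂
  refine ⟨List.IsChain.append hc₁ hc₂ ?_, ?_, ?_⟩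
  · simp_all
  · simp [List.head?_append, hhead₁]
  · simp [List.getLast?_append, hlast₂]

theorem exists_isPath_of_reflTransGen (h : ReflTransGen E a b) : ∃ l, IsPath E l a b := by
  obtain ⟨l, hchain, hlast⟩ := List.exists_isChain_cons_of_relationReflTransGen h
  exact ⟨a :: l, hchain, rfl, by rw [List.getLast?_eq_some_getLast (List.cons_ne_nil _ _), hlast]⟩

end Paths

section Reachability

variable {α : Type} {E : α → α → Prop}

theorem Set.Finite.reflTransGen_of_exists_pred {s : Set α} (hs : s.Finite)
    (hacyc : ∀ a, ¬ TransGen E a a) {P : α → Prop} {r : α}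
    (hpred : ∀ x ∈ s, P x → x ≠ r → ∃ p ∈ s, E p x ∧ P p) {x : α} (hx : x ∈ s) (hPx : P x) :
    ReflTransGen E r x := by
  have : IsStrictOrder α (TransGen E) :=
    { irrefl := hacyc, trans := fun _ _ _ => TransGen.trans }
  revert hPx
  refine (hs.wellFoundedOn (r := TransGen E)).induction hx
    (P := fun y => P y → ReflTransGen E r y) fun y hy ih hPy => ?_
  by_cases hyr : y = r
  · exact hyr ▸ .refl
  obtain ⟨p, hp, hpy, hPp⟩ := hpred y hy hPy hyr
  exact (ih p hp (.single hpy) hPp).tail hpy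

variable {s t u a b : α} (hsep : ∀ l, IsPath E l s t → u ∈ l)
include hsep

theorem reflTransGen_of_forall_isPath_mem (hst : ReflTransGen E s t) : ReflTransGen E u t := by
  obtain ⟨l, hl⟩ := exists_isPath_of_reflTransGen hst
  exact hl.reflTransGen_of_mem_right (hsep l hl)

theorem reflTransGen_of_forall_isPath_mem_of_transGen (hacyc : ∀ a, ¬ TransGen E a a)
    (hsa : ReflTransGen E s a) (hab : E a b) (hbt : ReflTransGen E b t) (hub : TransGen E u b) :
    ReflTransGen E u a := by
  obtain ⟨la, hla⟩ := exists_isPath_of_reflTransGen hsa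
  obtain ⟨lb, hlb⟩ := exists_isPath_of_reflTransGen hbt
  rcases List.mem_append.1 (hsep _ (hla.append hab hlb)) with hu | hu
  · exact hla.reflTransGen_of_mem_right hu
  · exact absurd (hub.trans_left (hlb.reflTransGen_of_mem_left hu)) (hacyc u)

end Reachability

theorem Lit.ne_compl {V : Type} (l : Lit V) : l ≠ l.compl := by
  cases l <;> simp [Lit.compl]

theorem stmt15_general {V : Type}
    (nodes : Finset (Lit V)) (E : Lit V → Lit V → Prop) (dl : Lit V → ℕ)
    (σ σd : Lit V) (d : ℕ)
    (hacyc : ∀ a, ¬ Relation.TransGen E a a)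
    -- predecessors of implied literals form reasons; every node of level `d`
    -- other than the decision literal has a predecessor at level `d`
    (hreason : ∀ x ∈ nodes, dl x = d → x ≠ σd →
        ∃ p ∈ nodes, E p x ∧ dl p = d)
    (hreach : Relation.ReflTransGen E σd σ ∧ Relation.ReflTransGen E σd σ.compl)
    -- `u` is the First-UIP: a UIP from which no other UIP is reachable
    (u : Lit V) (hu : IsUIP nodes E σ σd u)
    -- the conflict side of the First-UIP-Cut and its conflict nogood
    (C : Set (Lit V))
    (hC : C = {x | x ≠ u ∧ Relation.ReflTransGen E u x ∧
        (Relation.ReflTransGen E x σ ∨ Relation.ReflTransGen E x σ.compl)})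
    (nogood : Set (Lit V))
    (hng : nogood = {a | a ∈ nodes ∧ a ∉ C ∧ ∃ b ∈ C, E a b}) :
    u ∈ nogood ∧ ∀ a ∈ nogood, dl a = d → a = u := by
  subst hC hng
  obtain ⟨hu_mem, hsep⟩ := hu
  have reaches_conflict_iff : ∀ x, (ReflTransGen E x σ ∨ ReflTransGen E x σ.compl) ↔
      ∃ c, (c = σ ∨ c = σ.compl) ∧ ReflTransGen E x c := by
    grind
  have hu_reach : ∀ c, (c = σ ∨ c = σ.compl) → ReflTransGen E u c := by
    rintro c hc
    refine reflTransGen_of_forall_isPath_mem (fun l => hsep l c hc) ?_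
    rcases hc with rfl | rfl
    exacts [hreach.1, hreach.2]
  refine ⟨⟨hu_mem, fun h => h.1 rfl, ?_⟩, ?_⟩
  · -- `u` differs from `σ` or from `σ.compl`; its first edge towards that literal enters `C`
    obtain ⟨c, hc, huc⟩ : ∃ c, (c = σ ∨ c = σ.compl) ∧ u ≠ c := by
      by_cases huσ : u = σ
      · exact ⟨σ.compl, .inr rfl, huσ ▸ σ.ne_compl⟩
      · exact ⟨σ, .inl rfl, huσ⟩
    obtain ⟨b, hub, hbc⟩ := (ReflTransGen.cases_head_iff.1 (hu_reach c hc)).resolve_left huc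
    exact ⟨b, ⟨fun hbu => hacyc u (.single (hbu ▸ hub)), .single hub,
      (reaches_conflict_iff b).2 ⟨c, hc, hbc⟩⟩, hub⟩
  · rintro a ⟨ha, haC, b, ⟨hbu, hub, hbc⟩, hab⟩ hda
    by_contra hau
    obtain ⟨c, hc, hbc⟩ := (reaches_conflict_iff b).1 hbc
    have hσd_a : ReflTransGen E σd a :=
      nodes.finite_toSet.reflTransGen_of_exists_pred hacyc hreason ha hda
    have hu_a := reflTransGen_of_forall_isPath_mem_of_transGen (fun l => hsep l c hc) hacyc
      hσd_a hab hbc ((reflTransGen_iff_eq_or_transGen.1 hub).resolve_left hbu)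
    exact haC ⟨hau, hu_a, (reaches_conflict_iff a).2 ⟨c, hc, hbc.head hab⟩⟩

/-- the First-UIP-Nogood of a finite level-aware conflict
graph — the conflict nogood of the cut placing exactly the non-`u` literals
on directed paths from the First-UIP `u` to a conflicting literal on the
conflict side — contains `u`, and `u` is its only literal at the conflict
decision level `d`. -/
theorem stmt15 {V : Type} [DecidableEq V]
    (nodes : Finset (Lit V)) (E : Lit V → Lit V → Prop) (dl : Lit V → ℕ)
    (σ σd : Lit V) (d : ℕ) (hdl : dl σ = d)
    (hσ : σ ∈ nodes) (hσc : σ.compl ∈ nodes) (hσd : σd ∈ nodes)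
    (hE : ∀ a b, E a b → a ∈ nodes ∧ b ∈ nodes)
    (hacyc : ∀ a, ¬ Relation.TransGen E a a)
    (hdlσd : dl σd = d) (hdlσc : dl σ.compl = d)
    (hσne : σ ≠ σd) (hσcne : σ.compl ≠ σd)
    (hdec : ∀ a, ¬ E a σd)
    (hmax : ∀ x ∈ nodes, dl x ≤ d)
    -- level-awareness
    (hla : (∃ p, E p σ ∧ dl p = d) ∧ (∃ p, E p σ.compl ∧ dl p = d))
    -- predecessors of implied literals form reasons; every node of level `d`
    -- other than the decision literal has a predecessor at level `d`
    (hreason : ∀ x ∈ nodes, dl x = d → x ≠ σd →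
        ∃ p ∈ nodes, E p x ∧ dl p = d)
    (hreach : Relation.ReflTransGen E σd σ ∧ Relation.ReflTransGen E σd σ.compl)
    -- `u` is the First-UIP: a UIP from which no other UIP is reachable
    (u : Lit V) (hu : IsUIP nodes E σ σd u)
    (hfirst : ∀ v : Lit V, IsUIP nodes E σ σd v → v ≠ u → ¬ Relation.TransGen E u v)
    -- the conflict side of the First-UIP-Cut and its conflict nogood
    (C : Set (Lit V))
    (hC : C = {x | x ≠ u ∧ Relation.ReflTransGen E u x ∧
        (Relation.ReflTransGen E x σ ∨ Relation.ReflTransGen E x σ.compl)})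
    (nogood : Set (Lit V))
    (hng : nogood = {a | a ∈ nodes ∧ a ∉ C ∧ ∃ b ∈ C, E a b}) :
    u ∈ nogood ∧ ∀ a ∈ nogood, dl a = d → a = u :=
  stmt15_general nodes E dl σ σd d hacyc hreason hreach u hu C hC nogood hng
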